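/- Let m, n ≥ 1 with m not divisible by 3. Then ∑_{r_1,…,r_m ≤ n} ∏_{k=1}^{m} qbinom(n-r_k, r_{k+1}) q^{C(r_k,2)} (-1)^{r_k} equals (-1)^{⌊(m+n-1)m/3⌋} q^{mn(n-1)/6} if n ≢ 2 (mod 3), and equals 0 if n ≡ 2 (mod 3), where r_{m+1} := r_1. -/

import Mathlib

/-!
The sum is the trace of `M ^ m` for the transfer matrix `M r s = [n - r, s] q^C(r,2) (-1)^r` on
`{0, …, n}`. A q-Vandermonde-type summation computes `M ^ 2`, and the alternating sum
`∑ (-1)^w q^C(w,2) [N, w] = δ_{N,0}` then gives `M ^ 3 = (-1)^n q^C(n,2) • 1`, so only `tr M`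
and `tr M²` are needed. The trace `S n = ∑ (-1)^r q^C(r,2) [n - r, r]` satisfies
`S (n + 3) = -q^(n+1) S n`, through the deformation by an extra factor `q^(k r)`. Finally,
`[a + b, b]` is palindromic of degree `a b`, so `tr M²` is `(-1)^n q^C(n,2)` times `S n` with `q`
replaced by `q⁻¹`.
-/

open Finset

/-- The Gaussian (q-)binomial coefficient as a rational function in `q = RatFunc.X`. -/
noncomputable def qbin (a b : ℕ) : RatFunc ℚ :=
  if b ≤ a then ∏ i ∈ Finset.range b,
    (1 - RatFunc.X ^ (a - i)) / (1 - RatFunc.X ^ (i + 1)) else 0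

namespace Nat

lemma choose_two_succ (s : ℕ) : (s + 1).choose 2 = s.choose 2 + s := by
  rw [choose_succ_succ', choose_one_right, add_comm]

lemma choose_two_add (a b : ℕ) : (a + b).choose 2 = a.choose 2 + b.choose 2 + a * b := by
  induction b with
  | zero => simp
  | succ b ih => rw [← add_assoc, choose_two_succ, ih, choose_two_succ]; ring

lemma six_dvd_mul_sub_one {n : ℕ} (h : n % 3 ≠ 2) : 6 ∣ n * (n - 1) := by
  have h3 : 3 ∣ n * (n - 1) := by
    rcases (show n % 3 = 0 ∨ n % 3 = 1 by omega) with h0 | h1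
    · exact Dvd.dvd.mul_right (Nat.dvd_of_mod_eq_zero h0) _
    · exact Dvd.dvd.mul_left (Nat.dvd_of_mod_eq_zero (by omega)) _
  exact Nat.Coprime.mul_dvd_of_dvd_of_dvd (by norm_num) (Nat.even_mul_pred_self n).two_dvd h3

end Nat

lemma Fin.mk_succ_mod_eq_finRotate {m : ℕ} (k : Fin (m + 1)) :
    (⟨(k + 1) % (m + 1), Nat.mod_lt _ m.succ_pos⟩ : Fin (m + 1)) = finRotate _ k := by
  ext
  rw [coe_finRotate]
  split_ifs with hk
  · simp [hk]
  · exact Nat.mod_eq_of_lt (Nat.succ_lt_succ (Fin.val_lt_last hk))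

theorem pow_three_mul_add_of_pow_three_eq_smul_one {R A : Type*} [CommSemiring R] [Semiring A]
    [Algebra R A] {x : A} {c : R} (h : x ^ 3 = c • 1) (j i : ℕ) :
    x ^ (3 * j + i) = c ^ j • x ^ i := by
  rw [pow_add, pow_mul, h, smul_pow, one_pow, smul_mul_assoc, one_mul]

namespace Matrix

variable {ι R : Type*} [Fintype ι] [DecidableEq ι] [CommSemiring R]

theorem pow_succ_apply_eq_sum_prod (A : Matrix ι ι R) (m : ℕ) (i j : ι) :
    (A ^ (m + 1)) i j
      = ∑ c : Fin m → ι, ∏ k : Fin (m + 1),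
          A (Fin.cons (α := fun _ => ι) i c k) (Fin.snoc (α := fun _ => ι) c j k) := by
  induction m generalizing i with
  | zero => simp [Fin.snoc]
  | succ m ih =>
    rw [pow_succ', mul_apply, ← (Fin.consEquiv fun _ => ι).sum_comp, Fintype.sum_prod_type]
    refine sum_congr rfl fun x _ => ?_
    rw [ih, mul_sum]
    refine sum_congr rfl fun c _ => ?_
    simp [Fin.consEquiv, ← Fin.cons_snoc_eq_snoc_cons, Fin.prod_univ_succ]

theorem trace_pow_succ_eq_sum_prod (A : Matrix ι ι R) (m : ℕ) :
    (A ^ (m + 1)).trace = ∑ r : Fin (m + 1) → ι, ∏ k, A (r k) (r (finRotate _ k)) := by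
  rw [trace, ← (Fin.consEquiv fun _ => ι).sum_comp, Fintype.sum_prod_type]
  refine sum_congr rfl fun i _ => ?_
  rw [diag_apply, pow_succ_apply_eq_sum_prod]
  refine sum_congr rfl fun c _ => ?_
  simp [Fin.consEquiv, Fin.snoc_eq_cons_rotate]

end Matrix

local notation "K" => RatFunc ℚ
local notation "q" => (RatFunc.X : RatFunc ℚ)

lemma one_sub_X_pow_ne_zero {k : ℕ} (hk : k ≠ 0) : (1 : K) - q ^ k ≠ 0 := by
  rw [sub_ne_zero, ne_comm]
  intro h
  have := congrArg RatFunc.intDegree h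
  rw [← RatFunc.algebraMap_X, ← map_pow, RatFunc.intDegree_polynomial] at this
  simp [hk] at this

noncomputable def qPochhammer (n : ℕ) : K := ∏ i ∈ range n, (1 - q ^ (i + 1))

@[simp] lemma qPochhammer_zero : qPochhammer 0 = 1 := prod_range_zero _

lemma qPochhammer_succ (n : ℕ) : qPochhammer (n + 1) = qPochhammer n * (1 - q ^ (n + 1)) :=
  prod_range_succ _ _

lemma qPochhammer_ne_zero (n : ℕ) : qPochhammer n ≠ 0 :=
  prod_ne_zero_iff.mpr fun i _ => one_sub_X_pow_ne_zero i.succ_ne_zero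

lemma qbin_mul_qPochhammer {a b : ℕ} (h : b ≤ a) :
    qbin a b * (qPochhammer b * qPochhammer (a - b)) = qPochhammer a := by
  obtain ⟨c, rfl⟩ := Nat.exists_eq_add_of_le' h
  have hnum :
      ∏ i ∈ range b, (1 - q ^ (c + b - i)) = ∏ i ∈ range b, (1 - q ^ (c + i + 1)) := by
    rw [← prod_range_reflect]
    refine prod_congr rfl fun i hi => ?_
    rw [mem_range] at hi
    congr 2
    omega
  have hb := qPochhammer_ne_zero b
  simp only [qPochhammer] at hb ⊢
  rw [qbin, if_pos h, prod_div_distrib, hnum, Nat.add_sub_cancel, prod_range_add]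
  field_simp

lemma qbin_eq_div {a b : ℕ} (h : b ≤ a) :
    qbin a b = qPochhammer a / (qPochhammer b * qPochhammer (a - b)) :=
  eq_div_of_mul_eq (mul_ne_zero (qPochhammer_ne_zero _) (qPochhammer_ne_zero _))
    (qbin_mul_qPochhammer h)

lemma qbin_of_lt {a b : ℕ} (h : a < b) : qbin a b = 0 := if_neg h.not_ge

@[simp] lemma qbin_zero_right (a : ℕ) : qbin a 0 = 1 := by simp [qbin]

@[simp] lemma qbin_self (a : ℕ) : qbin a a = 1 := by
  rw [qbin_eq_div le_rfl, Nat.sub_self, qPochhammer_zero, mul_one,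
    div_self (qPochhammer_ne_zero a)]

lemma qbin_symm {a b : ℕ} (h : b ≤ a) : qbin a (a - b) = qbin a b := by
  rw [qbin_eq_div (Nat.sub_le a b), qbin_eq_div h, Nat.sub_sub_self h, mul_comm]

lemma qbin_succ_succ (a b : ℕ) :
    qbin (a + 1) (b + 1) = qbin a b + q ^ (b + 1) * qbin a (b + 1) := by
  rcases lt_trichotomy b a with hba | rfl | hab
  · obtain ⟨c, rfl⟩ := Nat.exists_eq_add_of_lt hba
    rw [qbin_eq_div (by omega), qbin_eq_div (by omega), qbin_eq_div (by omega),
      show b + c + 1 + 1 - (b + 1) = c + 1 by omega, show b + c + 1 - b = c + 1 by omega,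
      show b + c + 1 - (b + 1) = c by omega, qPochhammer_succ (b + c + 1), qPochhammer_succ b,
      qPochhammer_succ c]
    have := qPochhammer_ne_zero b
    have := qPochhammer_ne_zero c
    have := one_sub_X_pow_ne_zero (k := b + 1) (by omega)
    have := one_sub_X_pow_ne_zero (k := c + 1) (by omega)
    field_simp
    ring
  · simp [qbin_of_lt]
  · simp [qbin_of_lt, hab, Nat.lt_succ_of_lt hab]

lemma qbin_succ_right_mul (a b : ℕ) :
    qbin a (b + 1) * (1 - q ^ (b + 1)) = qbin a b * (1 - q ^ (a - b)) := by
  rcases lt_or_ge b a with hba | hab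
  · rw [qbin, if_pos (Nat.succ_le_of_lt hba), qbin, if_pos hba.le, prod_range_succ, mul_assoc,
      div_mul_cancel₀ _ (one_sub_X_pow_ne_zero b.succ_ne_zero)]
  · rw [qbin_of_lt (Nat.lt_succ_of_le hab), Nat.sub_eq_zero_of_le hab]
    simp

lemma qbin_succ_succ' (a b : ℕ) :
    qbin (a + 1) (b + 1) = qbin a (b + 1) + q ^ (a - b) * qbin a b := by
  linear_combination qbin_succ_succ a b - qbin_succ_right_mul a b

lemma qbin_mul_qbin {r v t : ℕ} (h : t ≤ v) :
    qbin r v * qbin v t = qbin r t * qbin (r - t) (v - t) := by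
  rcases le_or_gt v r with hvr | hvr
  · rw [qbin_eq_div hvr, qbin_eq_div h, qbin_eq_div (h.trans hvr),
      qbin_eq_div (Nat.sub_le_sub_right hvr t), show r - t - (v - t) = r - v by omega]
    field_simp [qPochhammer_ne_zero]
  · rw [qbin_of_lt hvr, zero_mul]
    rcases le_or_gt t r with htr | htr
    · rw [qbin_of_lt (by omega : r - t < v - t), mul_zero]
    · rw [qbin_of_lt htr, zero_mul]

lemma sum_alternating_qbin {a N : ℕ} (h : a ≤ N) :
    ∑ w ∈ range (N + 1), (-1 : K) ^ w * q ^ w.choose 2 * qbin a w = if a = 0 then 1 else 0 := by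
  rcases a with _ | a
  · rw [sum_range_succ', sum_eq_zero fun w _ => by rw [qbin_of_lt w.succ_pos, mul_zero]]
    simp
  · set d : ℕ → K := fun w => (-1) ^ w * q ^ (w + 1).choose 2 * qbin a w
    have hstep : ∀ w, (-1 : K) ^ (w + 1) * q ^ (w + 1).choose 2 * qbin (a + 1) (w + 1)
        = d (w + 1) - d w := by
      intro w
      simp only [d, qbin_succ_succ, Nat.choose_two_succ (w + 1)]
      ring
    rw [sum_range_succ', sum_congr rfl fun w _ => hstep w, sum_range_sub]
    simp [d, qbin_of_lt (show a < N by omega)]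

lemma sum_alternating_qbin_mul_qbin_succ (j n u : ℕ) :
    ∑ s ∈ range (n + 2), (-1 : K) ^ s * q ^ s.choose 2 * qbin (j + 1) s * qbin (n + 1 - s) u
      = ∑ s ∈ range (n + 2), (-1 : K) ^ s * q ^ s.choose 2 * qbin j s * qbin (n + 1 - s) u
        - q ^ j * ∑ s ∈ range (n + 1),
            (-1 : K) ^ s * q ^ s.choose 2 * qbin j s * qbin (n - s) u := by
  have hsplit : ∀ s,
      (-1 : K) ^ (s + 1) * q ^ (s + 1).choose 2 * qbin (j + 1) (s + 1) * qbin (n - s) u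
      = (-1 : K) ^ (s + 1) * q ^ (s + 1).choose 2 * qbin j (s + 1) * qbin (n - s) u
        - q ^ j * ((-1) ^ s * q ^ s.choose 2 * qbin j s * qbin (n - s) u) := by
    intro s
    rcases le_or_gt s j with hsj | hsj
    · obtain ⟨e, rfl⟩ := Nat.exists_eq_add_of_le hsj
      rw [qbin_succ_succ', Nat.add_sub_cancel_left, Nat.choose_two_succ]
      ring
    · rw [qbin_succ_succ', qbin_of_lt hsj]
      ring
  rw [sum_range_succ', sum_range_succ' _ (n + 1), mul_sum]
  simp only [Nat.add_sub_add_right, hsplit, sum_sub_distrib, qbin_zero_right]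
  ring

lemma sum_alternating_qbin_mul_qbin {j n u : ℕ} (hj : j ≤ n) (hu : u ≤ n) :
    ∑ s ∈ range (n + 1), (-1 : K) ^ s * q ^ s.choose 2 * qbin j s * qbin (n - s) u
      = q ^ (j * (n - u)) * qbin (n - j) (n - u) := by
  induction j generalizing n with
  | zero =>
    rw [sum_range_succ', sum_eq_zero fun s _ => by rw [qbin_of_lt s.succ_pos, mul_zero, zero_mul]]
    simp [qbin_symm hu]
  | succ j ih =>
    obtain ⟨n, rfl⟩ := Nat.exists_eq_add_of_le' (Nat.one_le_of_lt hj)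
    rw [sum_alternating_qbin_mul_qbin_succ, ih (by omega) hu]
    rcases hu.lt_or_eq with hu | rfl
    · rw [ih (by omega) (by omega), show n + 1 - u = n - u + 1 by omega,
        show n + 1 - j = n - j + 1 by omega,
        show n + 1 - (j + 1) = n - j by omega, qbin_succ_succ (n - j) (n - u)]
      ring
    · rw [sum_eq_zero fun s _ => by rw [qbin_of_lt (show n - s < n + 1 by omega), mul_zero]]
      simp

lemma sum_alternating_qbin_mul_qbin_eq_ite {n r t : ℕ} (hr : r ≤ n) (ht : t ≤ n) :
    ∑ s ∈ range (n + 1),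
        (-1 : K) ^ s * q ^ (s.choose 2 + (n - s) * (n - t)) * (qbin (n - r) s * qbin s (n - t))
      = if r = t then (-1) ^ (n - t) * q ^ ((n - t).choose 2 + t * (n - t)) else 0 := by
  rcases lt_or_ge t r with htr | hrt
  · rw [if_neg htr.ne', sum_eq_zero fun s _ => ?_]
    rcases lt_or_ge s (n - t) with hs | hs
    · rw [qbin_of_lt hs, mul_zero, mul_zero]
    · rw [qbin_of_lt (show n - r < s by omega), zero_mul, mul_zero]
  have hterm : ∀ w ∈ range (t + 1),
      (-1 : K) ^ (n - t + w) * q ^ ((n - t + w).choose 2 + (n - (n - t + w)) * (n - t))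
          * (qbin (n - r) (n - t + w) * qbin (n - t + w) (n - t))
        = (-1) ^ (n - t) * q ^ ((n - t).choose 2 + t * (n - t)) * qbin (n - r) (n - t)
          * ((-1) ^ w * q ^ w.choose 2 * qbin (t - r) w) := by
    intro w hw
    obtain ⟨e, rfl⟩ := Nat.exists_eq_add_of_le (Nat.le_of_lt_succ (mem_range.mp hw))
    rw [qbin_mul_qbin (Nat.le_add_right _ _), Nat.add_sub_cancel_left,
      show n - r - (n - (w + e)) = w + e - r by omega, show n - (n - (w + e) + w) = e by omega,
      Nat.choose_two_add]
    ring
  rw [show n + 1 = n - t + (t + 1) by omega, sum_range_add,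
    sum_eq_zero fun s hs => by rw [qbin_of_lt (mem_range.mp hs), mul_zero, mul_zero],
    zero_add, sum_congr rfl hterm, ← mul_sum, sum_alternating_qbin (Nat.sub_le t r)]
  rcases hrt.lt_or_eq with hrt | rfl
  · rw [if_neg (by omega), if_neg hrt.ne, mul_zero]
  · simp

noncomputable def transferMatrix (n : ℕ) : Matrix (Fin (n + 1)) (Fin (n + 1)) K :=
  Matrix.of fun r s => qbin (n - r) s * q ^ (r : ℕ).choose 2 * (-1) ^ (r : ℕ)

lemma transferMatrix_sq_apply (n : ℕ) (r u : Fin (n + 1)) :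
    (transferMatrix n ^ 2) r u
      = (-1) ^ (r : ℕ) * q ^ ((r : ℕ).choose 2 + (n - r) * (n - u)) * qbin r (n - u) := by
  rw [sq, Matrix.mul_apply]
  simp only [transferMatrix, Matrix.of_apply]
  rw [Fin.sum_univ_eq_sum_range (fun s => qbin (n - r) s * q ^ (r : ℕ).choose 2 * (-1) ^ (r : ℕ)
      * (qbin (n - s) u * q ^ s.choose 2 * (-1) ^ s))]
  calc _ = (-1) ^ (r : ℕ) * q ^ (r : ℕ).choose 2 * ∑ s ∈ range (n + 1),
        (-1 : K) ^ s * q ^ s.choose 2 * qbin (n - r) s * qbin (n - s) u := by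
        rw [mul_sum]; exact sum_congr rfl fun s _ => by ring
    _ = _ := by
      rw [sum_alternating_qbin_mul_qbin (Nat.sub_le n r) u.is_le, Nat.sub_sub_self r.is_le,
        pow_add]
      ring

lemma transferMatrix_pow_three (n : ℕ) :
    transferMatrix n ^ 3
      = ((-1) ^ n * q ^ n.choose 2) • (1 : Matrix (Fin (n + 1)) (Fin (n + 1)) K) := by
  ext r t
  rw [pow_succ', Matrix.mul_apply]
  simp only [transferMatrix_sq_apply]
  simp only [transferMatrix, Matrix.of_apply]
  rw [Fin.sum_univ_eq_sum_range (fun s => qbin (n - r) s * q ^ (r : ℕ).choose 2 * (-1) ^ (r : ℕ)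
      * ((-1) ^ s * q ^ (s.choose 2 + (n - s) * (n - t)) * qbin s (n - t)))]
  calc _ = (-1) ^ (r : ℕ) * q ^ (r : ℕ).choose 2 * ∑ s ∈ range (n + 1),
        (-1 : K) ^ s * q ^ (s.choose 2 + (n - s) * (n - t))
          * (qbin (n - r) s * qbin s (n - t)) := by
        rw [mul_sum]; exact sum_congr rfl fun s _ => by ring
    _ = _ := by
      rw [sum_alternating_qbin_mul_qbin_eq_ite r.is_le t.is_le, Matrix.smul_apply,
        Matrix.one_apply]
      rcases eq_or_ne r t with rfl | hrt
      · rw [if_pos rfl, if_pos rfl, smul_eq_mul, mul_one]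
        calc _ = (-1 : K) ^ ((r : ℕ) + (n - r)) * q ^ ((r : ℕ) + (n - r)).choose 2 := by
              rw [Nat.choose_two_add]; ring
          _ = _ := by rw [Nat.add_sub_cancel' r.is_le]
      · rw [if_neg (Fin.val_ne_of_ne hrt), if_neg hrt, mul_zero, smul_zero]

noncomputable def qDiagonalSum (k n : ℕ) : K :=
  ∑ r ∈ range (n + 1), (-1) ^ r * q ^ (r.choose 2 + k * r) * qbin (n - r) r

lemma qDiagonalSum_eq_sum_range {k n N : ℕ} (h : n < N) :
    qDiagonalSum k n = ∑ r ∈ range N, (-1) ^ r * q ^ (r.choose 2 + k * r) * qbin (n - r) r := by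
  refine sum_subset (range_subset_range.mpr h) fun r hrN hr => ?_
  rw [qbin_of_lt (by simp at hr; omega), mul_zero]

lemma qDiagonalSum_add_two (k n : ℕ) :
    qDiagonalSum k (n + 2) = qDiagonalSum (k + 1) (n + 1) - q ^ k * qDiagonalSum (k + 1) n := by
  have hterm : ∀ r, (-1 : K) ^ (r + 1) * q ^ ((r + 1).choose 2 + k * (r + 1))
        * qbin (n + 2 - (r + 1)) (r + 1)
      = (-1) ^ (r + 1) * q ^ ((r + 1).choose 2 + (k + 1) * (r + 1)) * qbin (n + 1 - (r + 1)) (r + 1)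
        - q ^ k * ((-1) ^ r * q ^ (r.choose 2 + (k + 1) * r) * qbin (n - r) r) := by
    intro r
    rcases le_or_gt r n with hr | hr
    · rw [show n + 2 - (r + 1) = n - r + 1 by omega, show n + 1 - (r + 1) = n - r by omega,
        qbin_succ_succ, Nat.choose_two_succ]
      ring
    · rw [qbin_of_lt (show n + 2 - (r + 1) < r + 1 by omega),
        qbin_of_lt (show n + 1 - (r + 1) < r + 1 by omega), qbin_of_lt (show n - r < r by omega)]
      ring
  rw [qDiagonalSum, qDiagonalSum_eq_sum_range (show n + 1 < n + 3 by omega),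
    qDiagonalSum_eq_sum_range (show n < n + 2 by omega), sum_range_succ',
    sum_range_succ' _ (n + 2),
    sum_congr rfl fun r _ => hterm r, sum_sub_distrib, mul_sum]
  simp only [Nat.reduceSubDiff, pow_zero, Nat.choose_zero_succ, mul_zero, add_zero, mul_one,
    tsub_zero, qbin_zero_right]
  ring

lemma qDiagonalSum_succ_add_two (k n : ℕ) :
    qDiagonalSum (k + 1) (n + 2)
      = qDiagonalSum (k + 1) (n + 1) - q ^ (n + k + 1) * qDiagonalSum k n := by
  have hterm : ∀ r, (-1 : K) ^ (r + 1) * q ^ ((r + 1).choose 2 + (k + 1) * (r + 1))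
        * qbin (n + 2 - (r + 1)) (r + 1)
      = (-1) ^ (r + 1) * q ^ ((r + 1).choose 2 + (k + 1) * (r + 1)) * qbin (n + 1 - (r + 1)) (r + 1)
        - q ^ (n + k + 1) * ((-1) ^ r * q ^ (r.choose 2 + k * r) * qbin (n - r) r) := by
    intro r
    rcases le_or_gt (2 * r) n with hr | hr
    · obtain ⟨e, rfl⟩ := Nat.exists_eq_add_of_le hr
      rw [show 2 * r + e + 2 - (r + 1) = r + e + 1 by omega,
        show 2 * r + e + 1 - (r + 1) = r + e by omega, show 2 * r + e - r = r + e by omega,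
        qbin_succ_succ', Nat.add_sub_cancel_left, Nat.choose_two_succ]
      ring
    · rw [qbin_of_lt (show n - r < r by omega)]
      rcases le_or_gt r n with hrn | hrn
      · rw [show n + 2 - (r + 1) = n - r + 1 by omega, show n + 1 - (r + 1) = n - r by omega,
          qbin_succ_succ', qbin_of_lt (show n - r < r by omega)]
        ring
      · rw [qbin_of_lt (show n + 2 - (r + 1) < r + 1 by omega),
          qbin_of_lt (show n + 1 - (r + 1) < r + 1 by omega)]
        ring
  rw [qDiagonalSum, qDiagonalSum_eq_sum_range (show n + 1 < n + 3 by omega),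
    qDiagonalSum_eq_sum_range (show n < n + 2 by omega), sum_range_succ',
    sum_range_succ' _ (n + 2),
    sum_congr rfl fun r _ => hterm r, sum_sub_distrib, mul_sum]
  simp only [Nat.reduceSubDiff, pow_zero, Nat.choose_zero_succ, mul_zero, add_zero, mul_one,
    tsub_zero, qbin_zero_right]
  ring

lemma qDiagonalSum_zero_add_three (n : ℕ) :
    qDiagonalSum 0 (n + 3) = -q ^ (n + 1) * qDiagonalSum 0 n := by
  rw [qDiagonalSum_add_two, qDiagonalSum_succ_add_two]
  ring

lemma qDiagonalSum_zero_eq : ∀ n : ℕ, qDiagonalSum 0 n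
    = if n % 3 = 2 then 0 else (-1) ^ (n / 3) * q ^ (n * (n - 1) / 6)
  | 0 => by simp [qDiagonalSum]
  | 1 => by simp [qDiagonalSum, sum_range_succ, qbin_of_lt]
  | 2 => by simp [qDiagonalSum, sum_range_succ, qbin_of_lt]
  | n + 3 => by
    have hexp : (n + 3) * (n + 3 - 1) / 6 = n * (n - 1) / 6 + (n + 1) := by
      have : (n + 3) * (n + 3 - 1) = n * (n - 1) + 6 * (n + 1) := by
        rcases n with _ | n
        · rfl
        · rw [show n + 1 + 3 - 1 = n + 3 by omega, Nat.add_sub_cancel]; ring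
      omega
    rw [qDiagonalSum_zero_add_three, qDiagonalSum_zero_eq n, Nat.add_mod_right, hexp,
      Nat.add_div_right n three_pos]
    split_ifs
    · ring
    · ring

theorem transcendental_X_inv : Transcendental ℚ (q⁻¹) := by
  have h : Transcendental ℚ q := by
    convert @RatFunc.transcendental_X ℚ _ _
    exact Subsingleton.elim _ _
  rwa [Transcendental, ← IsAlgebraic.inv_iff] at h

noncomputable def qInv : K →+* K :=
  RatFunc.liftRingHom (Polynomial.aeval q⁻¹).toRingHom
    (nonZeroDivisors_le_comap_nonZeroDivisors_of_injective _
      (transcendental_iff_injective.mp transcendental_X_inv))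

lemma qInv_X : qInv q = q⁻¹ := by
  simp [qInv, RatFunc.liftRingHom_apply]

lemma X_pow_mul_qInv_X_pow (e : ℕ) : q ^ e * qInv (q ^ e) = 1 := by
  rw [map_pow, qInv_X, inv_pow, mul_inv_cancel₀ (pow_ne_zero _ RatFunc.X_ne_zero)]

lemma X_pow_mul_qInv_qPochhammer (k : ℕ) :
    q ^ (k + 1).choose 2 * qInv (qPochhammer k) = (-1) ^ k * qPochhammer k := by
  induction k with
  | zero => simp
  | succ k ih =>
    have hk : q ^ (k + 1) * qInv (1 - q ^ (k + 1)) = -(1 - q ^ (k + 1)) := by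
      rw [map_sub, map_one, mul_sub, X_pow_mul_qInv_X_pow]
      ring
    rw [qPochhammer_succ, map_mul, Nat.choose_two_succ (k + 1), pow_add]
    linear_combination (q ^ (k + 1) * qInv (1 - q ^ (k + 1))) * ih
      + (-1) ^ k * qPochhammer k * hk

lemma X_pow_mul_qInv_qbin (a b : ℕ) : q ^ (a * b) * qInv (qbin (a + b) b) = qbin (a + b) b := by
  have hQ := congrArg qInv (qbin_mul_qPochhammer (Nat.le_add_left b a))
  rw [Nat.add_sub_cancel, map_mul, map_mul] at hQ
  have hexp : (a + b + 1).choose 2 = a * b + (b + 1).choose 2 + (a + 1).choose 2 := by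
    rw [show a + b + 1 = a + 1 + b by ring, Nat.choose_two_add, Nat.choose_two_succ b]
    ring
  have hne : (-1 : K) ^ (a + b) * (qPochhammer b * qPochhammer a) ≠ 0 := by
    simp [qPochhammer_ne_zero]
  refine mul_right_cancel₀ hne ?_
  calc q ^ (a * b) * qInv (qbin (a + b) b) * ((-1) ^ (a + b) * (qPochhammer b * qPochhammer a))
      = q ^ (a * b) * qInv (qbin (a + b) b) * ((q ^ (b + 1).choose 2 * qInv (qPochhammer b))
          * (q ^ (a + 1).choose 2 * qInv (qPochhammer a))) := by
        rw [X_pow_mul_qInv_qPochhammer, X_pow_mul_qInv_qPochhammer]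
        ring
    _ = q ^ (a + b + 1).choose 2 * qInv (qPochhammer (a + b)) := by
        rw [hexp, ← hQ]
        ring
    _ = qbin (a + b) b * ((-1) ^ (a + b) * (qPochhammer b * qPochhammer a)) := by
        rw [X_pow_mul_qInv_qPochhammer, ← qbin_mul_qPochhammer (Nat.le_add_left b a),
          Nat.add_sub_cancel]
        ring

lemma trace_transferMatrix (n : ℕ) : (transferMatrix n).trace = qDiagonalSum 0 n := by
  simp only [Matrix.trace, Matrix.diag, transferMatrix, Matrix.of_apply]
  rw [Fin.sum_univ_eq_sum_range (fun r => qbin (n - r) r * q ^ r.choose 2 * (-1 : K) ^ r)]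
  exact sum_congr rfl fun r _ => by ring

lemma trace_transferMatrix_sq (n : ℕ) :
    (transferMatrix n ^ 2).trace = (-1) ^ n * q ^ n.choose 2 * qInv (qDiagonalSum 0 n) := by
  simp only [Matrix.trace, Matrix.diag, transferMatrix_sq_apply]
  rw [Fin.sum_univ_eq_sum_range (fun r => (-1 : K) ^ r * q ^ (r.choose 2 + (n - r) * (n - r))
    * qbin r (n - r)), ← sum_range_reflect, qDiagonalSum, map_sum, mul_sum]
  refine sum_congr rfl fun w hw => ?_
  simp only [Nat.add_sub_cancel, Nat.sub_sub_self (Nat.le_of_lt_succ (mem_range.mp hw)), zero_mul,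
    add_zero, map_mul, map_pow, map_neg, map_one]
  obtain ⟨r, hr⟩ : ∃ r, n - w = r := ⟨_, rfl⟩
  rcases lt_or_ge r w with hrw | hrw
  · simp [hr, qbin_of_lt hrw]
  obtain ⟨c, rfl⟩ := Nat.exists_eq_add_of_le' hrw
  have hpal := X_pow_mul_qInv_qbin c w
  have hinv : q ^ w.choose 2 * qInv q ^ w.choose 2 = 1 := by
    rw [← map_pow, X_pow_mul_qInv_X_pow]
  have hsign : ((-1 : K) ^ w) ^ 2 = 1 := by rw [← pow_mul, pow_mul', neg_one_sq, one_pow]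
  rw [hr, show n = c + w + w by omega, Nat.choose_two_add (c + w)]
  linear_combination (-(-1 : K) ^ (c + w) * q ^ ((c + w).choose 2 + w * w)) * hpal
    - ((-1) ^ (c + w) * q ^ ((c + w).choose 2 + w * w + c * w) * qInv (qbin (c + w) w)) * hsign
    - ((-1) ^ (c + w) * (-1) ^ (2 * w) * q ^ ((c + w).choose 2 + w * w + c * w)
      * qInv (qbin (c + w) w)) * hinv

noncomputable def traceClosedForm (m n : ℕ) : K :=
  if n % 3 = 2 then 0 else (-1) ^ ((m + n - 1) * m / 3) * q ^ (m * n * (n - 1) / 6)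

lemma traceClosedForm_add_three {m : ℕ} (n : ℕ) (hm : 0 < m) :
    traceClosedForm (m + 3) n = (-1) ^ n * q ^ n.choose 2 * traceClosedForm m n := by
  unfold traceClosedForm
  split_ifs with h
  · rw [mul_zero]
  obtain ⟨d, hd⟩ := Nat.six_dvd_mul_sub_one h
  obtain ⟨m, rfl⟩ := Nat.exists_eq_add_of_le' hm
  have hq : (m + 1 + 3) * n * (n - 1) / 6 = (m + 1) * n * (n - 1) / 6 + n.choose 2 := by
    rw [show (m + 1 + 3) * n * (n - 1) = (m + 1) * n * (n - 1) + 3 * (n * (n - 1)) by ring,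
      Nat.choose_two_right, hd]
    omega
  have hs : (m + 1 + 3 + n - 1) * (m + 1 + 3) / 3
      = (m + 1 + n - 1) * (m + 1) / 3 + (2 * (m + 2) + n) := by
    rw [show m + 1 + 3 + n - 1 = m + n + 3 by omega, show m + 1 + n - 1 = m + n by omega,
      show (m + n + 3) * (m + 1 + 3) = (m + n) * (m + 1) + 3 * (2 * (m + 2) + n) by ring]
    omega
  rw [hq, hs, pow_add, pow_add, pow_add, pow_mul, neg_one_sq, one_pow, one_mul]
  ring

lemma traceClosedForm_three_mul_add (n j : ℕ) {i : ℕ} (hi : 0 < i) :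
    traceClosedForm (3 * j + i) n = ((-1) ^ n * q ^ n.choose 2) ^ j * traceClosedForm i n := by
  induction j with
  | zero => simp
  | succ j ih =>
    rw [show 3 * (j + 1) + i = 3 * j + i + 3 by ring, traceClosedForm_add_three n (by omega), ih]
    ring

lemma trace_transferMatrix_eq_traceClosedForm (n : ℕ) :
    (transferMatrix n).trace = traceClosedForm 1 n := by
  simp [trace_transferMatrix, qDiagonalSum_zero_eq, traceClosedForm]

lemma trace_transferMatrix_sq_eq_traceClosedForm (n : ℕ) :
    (transferMatrix n ^ 2).trace = traceClosedForm 2 n := by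
  rw [trace_transferMatrix_sq, qDiagonalSum_zero_eq, traceClosedForm]
  split_ifs with h
  · simp
  obtain ⟨d, hd⟩ := Nat.six_dvd_mul_sub_one h
  have hC : n.choose 2 = 2 * d + d := by rw [Nat.choose_two_right, hd]; omega
  have hs : (-1 : K) ^ n * (-1) ^ (n / 3) = (-1) ^ ((2 + n - 1) * 2 / 3) := by
    rw [← pow_add, neg_one_pow_eq_pow_mod_two,
      neg_one_pow_eq_pow_mod_two (n := (2 + n - 1) * 2 / 3)]
    congr 1
    obtain ⟨t, rfl | rfl⟩ : ∃ t, n = 3 * t ∨ n = 3 * t + 1 := ⟨n / 3, by omega⟩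
    all_goals omega
  rw [hd, show 2 * n * (n - 1) = 6 * (2 * d) by rw [mul_assoc, hd]; ring,
    Nat.mul_div_cancel_left _ (by norm_num), Nat.mul_div_cancel_left _ (by norm_num), hC,
    map_mul, map_pow, map_neg, map_one, ← hs, pow_add]
  linear_combination ((-1) ^ n * (-1) ^ (n / 3) * q ^ (2 * d) : K) * X_pow_mul_qInv_X_pow d

lemma trace_transferMatrix_pow {m : ℕ} (n : ℕ) (hm : m % 3 ≠ 0) :
    (transferMatrix n ^ m).trace = traceClosedForm m n := by
  rw [← Nat.div_add_mod m 3,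
    pow_three_mul_add_of_pow_three_eq_smul_one (transferMatrix_pow_three n), Matrix.trace_smul,
    smul_eq_mul, traceClosedForm_three_mul_add n _ (Nat.pos_of_ne_zero hm)]
  rcases (show m % 3 = 1 ∨ m % 3 = 2 by omega) with h | h <;> rw [h]
  · rw [pow_one, trace_transferMatrix_eq_traceClosedForm]
  · rw [trace_transferMatrix_sq_eq_traceClosedForm]

theorem stmt8_general (m n : ℕ) (hm : 0 < m) (hm3 : m % 3 ≠ 0) :
    ∑ r : Fin m → Fin (n + 1), ∏ k : Fin m,
      (qbin (n - (r k : ℕ)) (r ⟨((k : ℕ) + 1) % m, Nat.mod_lt _ hm⟩ : ℕ) *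
        RatFunc.X ^ ((r k : ℕ)).choose 2 * (-1 : RatFunc ℚ) ^ (r k : ℕ))
    = if n % 3 = 2 then 0
      else (-1 : RatFunc ℚ) ^ ((m + n - 1) * m / 3) * RatFunc.X ^ (m * n * (n - 1) / 6) := by
  obtain ⟨m, rfl⟩ := Nat.exists_eq_add_of_le' hm
  rw [← traceClosedForm, ← trace_transferMatrix_pow n hm3, Matrix.trace_pow_succ_eq_sum_prod]
  simp only [Fin.mk_succ_mod_eq_finRotate, transferMatrix, Matrix.of_apply]

theorem stmt8 (m n : ℕ) (hm : 0 < m) (hn : 0 < n) (hm3 : m % 3 ≠ 0) :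
    ∑ r : Fin m → Fin (n + 1), ∏ k : Fin m,
      (qbin (n - (r k : ℕ)) (r ⟨((k : ℕ) + 1) % m, Nat.mod_lt _ hm⟩ : ℕ) *
        RatFunc.X ^ ((r k : ℕ)).choose 2 * (-1 : RatFunc ℚ) ^ (r k : ℕ))
    = if n % 3 = 2 then 0
      else (-1 : RatFunc ℚ) ^ ((m + n - 1) * m / 3) * RatFunc.X ^ (m * n * (n - 1) / 6) :=
  stmt8_general m n hm hm3
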